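/- arXiv:2008.05460 — 6 statements merged into one kernel-verified Lean document; each statement's English description precedes it below -/
import Mathlib

section
/- Suppose f: ℝ³ → ℝ is smooth with f_{uu} never zero, and suppose that (η¹ u + η⁰(t,x)) f_u(t,x,u) = η¹ f(t,x,u) + η⁰_{tx}(t,x) holds for all (t,x,u), where η¹ is a constant and η⁰ is a smooth function. Then (η¹, η⁰) = (0, 0). -/
/-- If f is smooth with f_{uu} nowhere zero and
(η¹u + η⁰(t,x)) f_u = η¹ f + η⁰_{tx}, then η¹ = 0 and η⁰ = 0. -/
theorem stmt5 (f : ℝ → ℝ → ℝ → ℝ)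
    (hf : ContDiff ℝ (⊤ : ℕ∞) (fun p : ℝ × ℝ × ℝ => f p.1 p.2.1 p.2.2))
    (hfuu : ∀ t x u, deriv (deriv (fun s => f t x s)) u ≠ 0)
    (η1 : ℝ) (η0 : ℝ → ℝ → ℝ)
    (hη0 : ContDiff ℝ (⊤ : ℕ∞) (fun q : ℝ × ℝ => η0 q.1 q.2))
    (heq : ∀ t x u, (η1 * u + η0 t x) * deriv (fun s => f t x s) u
        = η1 * f t x u + deriv (fun s => deriv (fun r => η0 s r) x) t) :
    η1 = 0 ∧ ∀ t x, η0 t x = 0 := by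
  have key : ∀ t x u, η1 * u + η0 t x = 0 := by
    intro t x u
    set g : ℝ → ℝ := fun s => f t x s with hgdef
    have hg : ContDiff ℝ (⊤ : ℕ∞) g := by
      have : ContDiff ℝ (⊤ : ℕ∞) (fun s : ℝ => ((t, x, s) : ℝ × ℝ × ℝ)) :=
        contDiff_const.prodMk (contDiff_const.prodMk contDiff_id)
      exact hf.comp this
    have hg2 : ContDiff ℝ (⊤ : ℕ∞) g := hg.of_le (by simp)
    have hg' : ContDiff ℝ (⊤ : ℕ∞) (deriv g) := (contDiff_infty_iff_deriv.1 hg2).2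
    set K : ℝ := deriv (fun s => deriv (fun r => η0 s r) x) t with hK
    -- LHS and RHS as functions of u
    have hL : HasDerivAt (fun s => (η1 * s + η0 t x) * deriv g s)
        (η1 * deriv g u + (η1 * u + η0 t x) * deriv (deriv g) u) u := by
      have h1 : HasDerivAt (fun s : ℝ => η1 * s + η0 t x) η1 u := by
        simpa using ((hasDerivAt_id u).const_mul η1).add_const (η0 t x)
      have h2 : HasDerivAt (deriv g) (deriv (deriv g) u) u :=
        ((hg'.differentiable (by simp)) u).hasDerivAt
      exact h1.mul h2
    have hR : HasDerivAt (fun s => η1 * g s + K) (η1 * deriv g u) u :=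
      (((hg2.differentiable (by simp)) u).hasDerivAt.const_mul η1).add_const K
    have hfun : (fun s => (η1 * s + η0 t x) * deriv g s) = fun s => η1 * g s + K := by
      funext s; exact heq t x s
    rw [hfun] at hL
    have := hL.unique hR
    have h0 : (η1 * u + η0 t x) * deriv (deriv g) u = 0 := by linarith
    rcases mul_eq_zero.1 h0 with h | h
    · exact h
    · exact absurd h (hfuu t x u)
  have hη0z : ∀ t x, η0 t x = 0 := by
    intro t x
    have := key t x 0
    simpa using this
  refine ⟨?_, hη0z⟩
  have := key 0 0 1
  rw [hη0z 0 0] at this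
  simpa using this
end

section
/- Let f(u) = |u|^p u for a real constant p with p ≠ −1 and p ≠ 0. Then the four vector fields ∂_t, ∂_x, t∂_t − x∂_x, and −pt∂_t + u∂_u each satisfy the classifying equation τ f_t + ξ f_x + (η¹u + η⁰)f_u = (η¹ − τ_t − ξ_x)f + η⁰_{tx} for the equation u_{tx} = f(u), and they span a four-dimensional Lie algebra of vector fields closed under the Lie bracket. -/
/-- Vector fields of the form τ(t)∂_t + ξ(x)∂_x + η(u)∂_u on ℝ³,
represented as triples of coefficient functions. -/
abbrev VF3 : Type := (ℝ → ℝ) × (ℝ → ℝ) × (ℝ → ℝ)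

/-- The Lie bracket of two such vector fields (computed componentwise since each
component depends on a single separate variable). -/
noncomputable def vfBracket (Q R : VF3) : VF3 :=
  (fun t => Q.1 t * deriv R.1 t - R.1 t * deriv Q.1 t,
   fun x => Q.2.1 x * deriv R.2.1 x - R.2.1 x * deriv Q.2.1 x,
   fun u => Q.2.2 u * deriv R.2.2 u - R.2.2 u * deriv Q.2.2 u)

/-- The classifying equation for Lie symmetries τ(t)∂_t + ξ(x)∂_x + η¹u∂_u
of u_{tx} = f(t,x,u) (with η⁰ = 0). -/
noncomputable def ClassifyingEq (f : ℝ → ℝ → ℝ → ℝ) (τ ξ : ℝ → ℝ) (η1 : ℝ) : Prop :=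
  ∀ t x u : ℝ,
    τ t * deriv (fun s => f s x u) t + ξ x * deriv (fun s => f t s u) x
      + η1 * u * deriv (fun s => f t x s) u
    = (η1 - deriv τ t - deriv ξ x) * f t x u

/-- The four vector fields ∂_t, ∂_x, t∂_t − x∂_x, −pt∂_t + u∂_u. -/
noncomputable def powQs (p : ℝ) : Fin 4 → VF3 :=
  ![(fun _ => 1, fun _ => 0, fun _ => 0),
    (fun _ => 0, fun _ => 1, fun _ => 0),
    (fun t => t, fun x => -x, fun _ => 0),
    (fun t => -p * t, fun _ => 0, fun u => u)]


lemma hasDerivAt_abs_rpow_mul (p : ℝ) {u : ℝ} (hu : u ≠ 0) :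
    HasDerivAt (fun s : ℝ => |s| ^ p * s) ((p + 1) * |u| ^ p) u := by
  rcases hu.lt_or_gt with h | h
  · have h1 : HasDerivAt (fun s : ℝ => (-s) ^ p * s)
        ((p * (-u) ^ (p - 1) * (-1)) * u + (-u) ^ p * 1) u := by
      exact (((Real.hasDerivAt_rpow_const (p := p) (Or.inl (neg_ne_zero.mpr hu))).comp u
        (hasDerivAt_neg u))).mul (hasDerivAt_id u)
    have heq : (fun s : ℝ => |s| ^ p * s) =ᶠ[nhds u] (fun s : ℝ => (-s) ^ p * s) := by
      filter_upwards [Iio_mem_nhds h] with s hs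
      rw [abs_of_neg hs]
    have h2 := h1.congr_of_eventuallyEq heq
    refine h2.congr_deriv (Eq.symm ?_)
    rw [abs_of_neg h]
    have h3 : (-u) ^ (p - 1) * (-u) = (-u) ^ p := by
      rw [← Real.rpow_add_one (neg_ne_zero.mpr hu)]; ring_nf
    linear_combination (-p) * h3
  · have h1 : HasDerivAt (fun s : ℝ => s ^ p * s)
        ((p * u ^ (p - 1)) * u + u ^ p * 1) u :=
      (Real.hasDerivAt_rpow_const (p := p) (Or.inl hu)).mul (hasDerivAt_id u)
    have heq : (fun s : ℝ => |s| ^ p * s) =ᶠ[nhds u] (fun s : ℝ => s ^ p * s) := by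
      filter_upwards [Ioi_mem_nhds h] with s hs
      rw [abs_of_pos hs]
    have h2 := h1.congr_of_eventuallyEq heq
    refine h2.congr_deriv (Eq.symm ?_)
    rw [abs_of_pos h]
    have h3 : u ^ (p - 1) * u = u ^ p := by
      rw [← Real.rpow_add_one hu]; ring_nf
    linear_combination (-p) * h3

lemma deriv_mulp (p t : ℝ) : deriv (HMul.hMul p) t = p := by
  simpa using ((hasDerivAt_id t).const_mul p).deriv

lemma deriv_negp_mul (p t : ℝ) : deriv (fun t => -p * t) t = -p := by
  simpa using ((hasDerivAt_id t).const_mul (-p)).deriv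

/-- For f(u) = |u|^p u with p ≠ −1, 0, the four fields ∂_t, ∂_x, t∂_t − x∂_x,
−pt∂_t + u∂_u satisfy the classifying equation of u_{tx} = f, and they span a
four-dimensional Lie algebra of vector fields closed under the Lie bracket. -/
theorem stmt6 (p : ℝ) (hp1 : p ≠ -1) (hp0 : p ≠ 0)
    (f : ℝ → ℝ → ℝ → ℝ) (hf : ∀ t x u : ℝ, f t x u = |u| ^ p * u) :
    ClassifyingEq f (fun _ => 1) (fun _ => 0) 0 ∧
    ClassifyingEq f (fun _ => 0) (fun _ => 1) 0 ∧
    ClassifyingEq f (fun t => t) (fun x => -x) 0 ∧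
    ClassifyingEq f (fun t => -p * t) (fun _ => 0) 1 ∧
    LinearIndependent ℝ (powQs p) ∧
    ∀ i j : Fin 4,
      vfBracket (powQs p i) (powQs p j) ∈ Submodule.span ℝ (Set.range (powQs p)) := by
  have hderivt : ∀ t x u : ℝ, deriv (fun s => f s x u) t = 0 := by
    intro t x u; simp only [hf]; exact deriv_const _ _
  have hderivx : ∀ t x u : ℝ, deriv (fun s => f t s u) x = 0 := by
    intro t x u; simp only [hf]; exact deriv_const _ _
  refine ⟨?_, ?_, ?_, ?_, ?_, ?_⟩
  · intro t x u; simp [ClassifyingEq, hderivt, hderivx]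
  · intro t x u; simp [ClassifyingEq, hderivt, hderivx]
  · intro t x u; simp [ClassifyingEq, hderivt, hderivx]
  · intro t x u
    simp only [hderivt, hderivx, deriv_negp_mul, deriv_const, mul_zero, zero_mul,
      add_zero, zero_add, one_mul, sub_zero, sub_neg_eq_add, hf]
    rcases eq_or_ne u 0 with rfl | hu
    · simp
    · have := (hasDerivAt_abs_rpow_mul p hu).deriv
      rw [this]; ring
  · rw [Fintype.linearIndependent_iff]
    intro g hg
    have h1 := congrArg (fun z : VF3 => z.1) hg
    have h2 := congrArg (fun z : VF3 => z.2.1) hg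
    have h3 := congrArg (fun z : VF3 => z.2.2) hg
    simp only [Fin.sum_univ_four, powQs, Matrix.cons_val_zero, Matrix.cons_val_one,
      Matrix.head_cons, Matrix.cons_val_two, Matrix.tail_cons, Matrix.cons_val_three,
      Prod.smul_mk, Prod.fst_add, Prod.snd_add, smul_eq_mul] at h1 h2 h3
    have e1 := fun t => congrFun h1 t
    have e2 := fun x => congrFun h2 x
    have e3 := fun u => congrFun h3 u
    simp only [Pi.add_apply, Pi.smul_apply, smul_eq_mul, Pi.zero_apply] at e1 e2 e3
    have hg3 : g 3 = 0 := by have := e3 1; simpa using this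
    have hg1 : g 1 = 0 := by have := e2 0; simpa using this
    have hg2 : g 2 = 0 := by have := e2 1; simp [hg1] at this; linarith
    have hg0 : g 0 = 0 := by have := e1 0; simpa [hg1, hg2, hg3] using this
    intro i; fin_cases i <;> assumption
  · have hmem : ∀ k : Fin 4, powQs p k ∈ Submodule.span ℝ (Set.range (powQs p)) :=
      fun k => Submodule.subset_span (Set.mem_range_self k)
    have hb00 : vfBracket (powQs p 0) (powQs p 0) ∈ Submodule.span ℝ (Set.range (powQs p)) := by
      have e : vfBracket (powQs p 0) (powQs p 0) = (0 : VF3) := by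
        unfold vfBracket powQs
        refine Prod.ext ?_ (Prod.ext ?_ ?_) <;> funext s <;>
          simp [deriv_mulp] <;> ring
      rw [e]; exact Submodule.zero_mem _
    have hb01 : vfBracket (powQs p 0) (powQs p 1) ∈ Submodule.span ℝ (Set.range (powQs p)) := by
      have e : vfBracket (powQs p 0) (powQs p 1) = (0 : VF3) := by
        unfold vfBracket powQs
        refine Prod.ext ?_ (Prod.ext ?_ ?_) <;> funext s <;>
          simp [deriv_mulp] <;> ring
      rw [e]; exact Submodule.zero_mem _
    have hb02 : vfBracket (powQs p 0) (powQs p 2) ∈ Submodule.span ℝ (Set.range (powQs p)) := by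
      have e : vfBracket (powQs p 0) (powQs p 2) = powQs p 0 := by
        unfold vfBracket powQs
        refine Prod.ext ?_ (Prod.ext ?_ ?_) <;> funext s <;>
          simp [deriv_mulp] <;> ring
      rw [e]; exact hmem 0
    have hb03 : vfBracket (powQs p 0) (powQs p 3) ∈ Submodule.span ℝ (Set.range (powQs p)) := by
      have e : vfBracket (powQs p 0) (powQs p 3) = (-p) • powQs p 0 := by
        unfold vfBracket powQs
        refine Prod.ext ?_ (Prod.ext ?_ ?_) <;> funext s <;>
          simp [deriv_mulp] <;> ring
      rw [e]; exact Submodule.smul_mem _ _ (hmem 0)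
    have hb10 : vfBracket (powQs p 1) (powQs p 0) ∈ Submodule.span ℝ (Set.range (powQs p)) := by
      have e : vfBracket (powQs p 1) (powQs p 0) = (0 : VF3) := by
        unfold vfBracket powQs
        refine Prod.ext ?_ (Prod.ext ?_ ?_) <;> funext s <;>
          simp [deriv_mulp] <;> ring
      rw [e]; exact Submodule.zero_mem _
    have hb11 : vfBracket (powQs p 1) (powQs p 1) ∈ Submodule.span ℝ (Set.range (powQs p)) := by
      have e : vfBracket (powQs p 1) (powQs p 1) = (0 : VF3) := by
        unfold vfBracket powQs
        refine Prod.ext ?_ (Prod.ext ?_ ?_) <;> funext s <;>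
          simp [deriv_mulp] <;> ring
      rw [e]; exact Submodule.zero_mem _
    have hb12 : vfBracket (powQs p 1) (powQs p 2) ∈ Submodule.span ℝ (Set.range (powQs p)) := by
      have e : vfBracket (powQs p 1) (powQs p 2) = (-1 : ℝ) • powQs p 1 := by
        unfold vfBracket powQs
        refine Prod.ext ?_ (Prod.ext ?_ ?_) <;> funext s <;>
          simp [deriv_mulp] <;> ring
      rw [e]; exact Submodule.smul_mem _ _ (hmem 1)
    have hb13 : vfBracket (powQs p 1) (powQs p 3) ∈ Submodule.span ℝ (Set.range (powQs p)) := by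
      have e : vfBracket (powQs p 1) (powQs p 3) = (0 : VF3) := by
        unfold vfBracket powQs
        refine Prod.ext ?_ (Prod.ext ?_ ?_) <;> funext s <;>
          simp [deriv_mulp] <;> ring
      rw [e]; exact Submodule.zero_mem _
    have hb20 : vfBracket (powQs p 2) (powQs p 0) ∈ Submodule.span ℝ (Set.range (powQs p)) := by
      have e : vfBracket (powQs p 2) (powQs p 0) = (-1 : ℝ) • powQs p 0 := by
        unfold vfBracket powQs
        refine Prod.ext ?_ (Prod.ext ?_ ?_) <;> funext s <;>
          simp [deriv_mulp] <;> ring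
      rw [e]; exact Submodule.smul_mem _ _ (hmem 0)
    have hb21 : vfBracket (powQs p 2) (powQs p 1) ∈ Submodule.span ℝ (Set.range (powQs p)) := by
      have e : vfBracket (powQs p 2) (powQs p 1) = powQs p 1 := by
        unfold vfBracket powQs
        refine Prod.ext ?_ (Prod.ext ?_ ?_) <;> funext s <;>
          simp [deriv_mulp] <;> ring
      rw [e]; exact hmem 1
    have hb22 : vfBracket (powQs p 2) (powQs p 2) ∈ Submodule.span ℝ (Set.range (powQs p)) := by
      have e : vfBracket (powQs p 2) (powQs p 2) = (0 : VF3) := by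
        unfold vfBracket powQs
        refine Prod.ext ?_ (Prod.ext ?_ ?_) <;> funext s <;>
          simp [deriv_mulp] <;> ring
      rw [e]; exact Submodule.zero_mem _
    have hb23 : vfBracket (powQs p 2) (powQs p 3) ∈ Submodule.span ℝ (Set.range (powQs p)) := by
      have e : vfBracket (powQs p 2) (powQs p 3) = (0 : VF3) := by
        unfold vfBracket powQs
        refine Prod.ext ?_ (Prod.ext ?_ ?_) <;> funext s <;>
          simp [deriv_mulp] <;> ring
      rw [e]; exact Submodule.zero_mem _
    have hb30 : vfBracket (powQs p 3) (powQs p 0) ∈ Submodule.span ℝ (Set.range (powQs p)) := by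
      have e : vfBracket (powQs p 3) (powQs p 0) = p • powQs p 0 := by
        unfold vfBracket powQs
        refine Prod.ext ?_ (Prod.ext ?_ ?_) <;> funext s <;>
          simp [deriv_mulp] <;> ring
      rw [e]; exact Submodule.smul_mem _ _ (hmem 0)
    have hb31 : vfBracket (powQs p 3) (powQs p 1) ∈ Submodule.span ℝ (Set.range (powQs p)) := by
      have e : vfBracket (powQs p 3) (powQs p 1) = (0 : VF3) := by
        unfold vfBracket powQs
        refine Prod.ext ?_ (Prod.ext ?_ ?_) <;> funext s <;>
          simp [deriv_mulp] <;> ring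
      rw [e]; exact Submodule.zero_mem _
    have hb32 : vfBracket (powQs p 3) (powQs p 2) ∈ Submodule.span ℝ (Set.range (powQs p)) := by
      have e : vfBracket (powQs p 3) (powQs p 2) = (0 : VF3) := by
        unfold vfBracket powQs
        refine Prod.ext ?_ (Prod.ext ?_ ?_) <;> funext s <;>
          simp [deriv_mulp] <;> ring
      rw [e]; exact Submodule.zero_mem _
    have hb33 : vfBracket (powQs p 3) (powQs p 3) ∈ Submodule.span ℝ (Set.range (powQs p)) := by
      have e : vfBracket (powQs p 3) (powQs p 3) = (0 : VF3) := by
        unfold vfBracket powQs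
        refine Prod.ext ?_ (Prod.ext ?_ ?_) <;> funext s <;>
          simp [deriv_mulp] <;> ring
      rw [e]; exact Submodule.zero_mem _
    intro i j
    fin_cases i <;> fin_cases j <;> first
      | exact hb00
      | exact hb01
      | exact hb02
      | exact hb03
      | exact hb10
      | exact hb11
      | exact hb12
      | exact hb13
      | exact hb20
      | exact hb21
      | exact hb22
      | exact hb23
      | exact hb30
      | exact hb31
      | exact hb32
      | exact hb33
end

section
/- Suppose f: ℝ³ → ℝ is smooth with f_u never zero and satisfies f_t = 0, μ f_u = f, and 2μt f_u = 2tf + μ_x for some smooth function μ(x), for all (t,x,u). Then μ is constant and nonzero, and there is a smooth function ν(x) with f(t,x,u) = ν(x) e^{u/μ}. -/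
/-- If f is smooth with f_u nowhere zero and satisfies f_t = 0, μ f_u = f and
2μt f_u = 2tf + μ_x for a smooth function μ(x), then μ is a nonzero constant
and f(t,x,u) = ν(x) e^{u/μ} for some smooth ν. -/
theorem stmt10 (f : ℝ → ℝ → ℝ → ℝ) (μ : ℝ → ℝ)
    (hf : ContDiff ℝ (⊤ : ℕ∞) (fun p : ℝ × ℝ × ℝ => f p.1 p.2.1 p.2.2))
    (hμ : ContDiff ℝ (⊤ : ℕ∞) μ)
    (hfu : ∀ t x u, deriv (fun s => f t x s) u ≠ 0)
    (h1 : ∀ t x u : ℝ, deriv (fun s => f s x u) t = 0)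
    (h2 : ∀ t x u : ℝ, μ x * deriv (fun s => f t x s) u = f t x u)
    (h3 : ∀ t x u : ℝ, 2 * μ x * t * deriv (fun s => f t x s) u
        = 2 * t * f t x u + deriv μ x) :
    ∃ c : ℝ, c ≠ 0 ∧ (∀ x, μ x = c) ∧
      ∃ ν : ℝ → ℝ, ContDiff ℝ (⊤ : ℕ∞) ν ∧
        ∀ t x u : ℝ, f t x u = ν x * Real.exp (u / c) := by
  -- μ' = 0 everywhere (take t = 0 in h3)
  have hμ' : ∀ x, deriv μ x = 0 := by
    intro x
    have := h3 0 x 0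
    simp at this
    linarith
  set c := μ 0 with hc
  have hconst : ∀ x, μ x = c :=
    fun x => is_const_of_deriv_eq_zero (hμ.differentiable (by simp)) hμ' x 0
  -- smoothness of slices
  have hg : ∀ t x, ContDiff ℝ (⊤ : ℕ∞) (fun s => f t x s) := fun t x =>
    hf.comp (contDiff_const.prodMk (contDiff_const.prodMk contDiff_id))
  have hgt : ∀ x u, ContDiff ℝ (⊤ : ℕ∞) (fun s => f s x u) := fun x u =>
    hf.comp (contDiff_id.prodMk (contDiff_const.prodMk contDiff_const))
  have hcne : c ≠ 0 := by
    intro h0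
    have hz : ∀ u : ℝ, f 0 0 u = 0 := by
      intro u
      have := h2 0 0 u
      rw [hconst 0, h0] at this
      linarith
    apply hfu 0 0 0
    have : (fun s => f 0 0 s) = fun _ => (0 : ℝ) := funext fun u => hz u
    rw [this, deriv_const]
  refine ⟨c, hcne, hconst, fun x => f 0 x 0,
    hf.comp (contDiff_const.prodMk (contDiff_id.prodMk contDiff_const)), ?_⟩
  -- f is independent of t
  have ht : ∀ t x u, f t x u = f 0 x u := fun t x u =>
    is_const_of_deriv_eq_zero ((hgt x u).differentiable (by simp))
      (fun s => h1 s x u) t 0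
  -- solve the ODE c f_u = f
  have key : ∀ t x u, f t x u = f t x 0 * Real.exp (u / c) := by
    intro t x u
    have hgd : Differentiable ℝ (fun s => f t x s) := (hg t x).differentiable (by simp)
    have hderiv : ∀ v : ℝ, deriv (fun s => f t x s) v = f t x v / c := by
      intro v
      have := h2 t x v
      rw [hconst x] at this
      field_simp
      linarith
    have hH : ∀ v : ℝ, HasDerivAt (fun s => f t x s * Real.exp (-(s / c))) 0 v := by
      intro v
      have hA : HasDerivAt (fun s => f t x s) (f t x v / c) v := by
        rw [← hderiv v]; exact (hgd v).hasDerivAt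
      have hB : HasDerivAt (fun s : ℝ => Real.exp (-(s / c)))
          (Real.exp (-(v / c)) * -(1 / c)) v := by
        have : HasDerivAt (fun s : ℝ => -(s / c)) (-(1 / c)) v :=
          ((hasDerivAt_id v).div_const c).neg
        exact this.exp
      have := hA.mul hB
      exact this.congr_deriv (by ring)
    have hc2 : f t x u * Real.exp (-(u / c)) = f t x 0 * Real.exp (-(0 / c)) :=
      is_const_of_deriv_eq_zero (fun y => (hH y).differentiableAt)
        (fun y => (hH y).deriv) u 0
    have hc3 : f t x u * Real.exp (-(u / c)) = f t x 0 := by simpa using hc2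
    calc f t x u = f t x u * Real.exp (-(u / c)) * Real.exp (u / c) := by
          rw [mul_assoc, ← Real.exp_add]; simp
      _ = f t x 0 * Real.exp (u / c) := by rw [hc3]
  intro t x u
  rw [key t x u, ht t x 0]
end

section
/- Suppose f: ℝ³ → ℝ is smooth and satisfies f_t + u f_u = f and f_x + u f_u = f for all (t,x,u). Then there is a smooth function ĝ of one variable such that f(t,x,u) = e^{x+t} ĝ(e^{−x−t}u). -/
/-- If f is smooth and satisfies f_t + u f_u = f and f_x + u f_u = f, then
f(t,x,u) = e^{x+t} ĝ(e^{−x−t}u) for some smooth ĝ. -/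
theorem stmt17 (f : ℝ → ℝ → ℝ → ℝ)
    (hf : ContDiff ℝ (⊤ : ℕ∞) (fun p : ℝ × ℝ × ℝ => f p.1 p.2.1 p.2.2))
    (h1 : ∀ t x u : ℝ,
      deriv (fun s => f s x u) t + u * deriv (fun s => f t x s) u = f t x u)
    (h2 : ∀ t x u : ℝ,
      deriv (fun s => f t s u) x + u * deriv (fun s => f t x s) u = f t x u) :
    ∃ g : ℝ → ℝ, ContDiff ℝ (⊤ : ℕ∞) g ∧
      ∀ t x u : ℝ, f t x u = Real.exp (x + t) * g (Real.exp (-x - t) * u) := by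
  set F : ℝ × ℝ × ℝ → ℝ := fun p => f p.1 p.2.1 p.2.2 with hF
  have hd : Differentiable ℝ F := hf.differentiable (by simp)
  have pd1 : ∀ t x u : ℝ, HasDerivAt (fun s => f s x u)
      (fderiv ℝ F (t, x, u) (1, 0, 0)) t := by
    intro t x u
    have hγ : HasDerivAt (fun s : ℝ => ((s : ℝ), (x : ℝ), (u : ℝ)))
        ((1 : ℝ), (0 : ℝ), (0 : ℝ)) t :=
      (hasDerivAt_id t).prodMk ((hasDerivAt_const t x).prodMk (hasDerivAt_const t u))
    exact (hd (t, x, u)).hasFDerivAt.comp_hasDerivAt t hγ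
  have pd2 : ∀ t x u : ℝ, HasDerivAt (fun s => f t s u)
      (fderiv ℝ F (t, x, u) (0, 1, 0)) x := by
    intro t x u
    have hγ : HasDerivAt (fun s : ℝ => ((t : ℝ), (s : ℝ), (u : ℝ)))
        ((0 : ℝ), (1 : ℝ), (0 : ℝ)) x :=
      (hasDerivAt_const x t).prodMk ((hasDerivAt_id x).prodMk (hasDerivAt_const x u))
    exact (hd (t, x, u)).hasFDerivAt.comp_hasDerivAt x hγ
  have pd3 : ∀ t x u : ℝ, HasDerivAt (fun s => f t x s)
      (fderiv ℝ F (t, x, u) (0, 0, 1)) u := by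
    intro t x u
    have hγ : HasDerivAt (fun s : ℝ => ((t : ℝ), (x : ℝ), (s : ℝ)))
        ((0 : ℝ), (0 : ℝ), (1 : ℝ)) u :=
      (hasDerivAt_const u t).prodMk ((hasDerivAt_const u x).prodMk (hasDerivAt_id u))
    exact (hd (t, x, u)).hasFDerivAt.comp_hasDerivAt u hγ
  have h1' : ∀ t x u : ℝ,
      fderiv ℝ F (t, x, u) (1, 0, u) = f t x u := by
    intro t x u
    have hdec : ((1 : ℝ), (0 : ℝ), u) = ((1 : ℝ), (0 : ℝ), (0 : ℝ))
        + u • ((0 : ℝ), (0 : ℝ), (1 : ℝ)) := by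
      simp [Prod.ext_iff]
    rw [hdec, map_add, map_smul, smul_eq_mul,
      show (fderiv ℝ F (t, x, u)) (1, 0, 0) = deriv (fun s => f s x u) t from
        (pd1 t x u).deriv.symm,
      show (fderiv ℝ F (t, x, u)) (0, 0, 1) = deriv (fun s => f t x s) u from
        (pd3 t x u).deriv.symm]
    exact h1 t x u
  have h2' : ∀ t x u : ℝ,
      fderiv ℝ F (t, x, u) (0, 1, u) = f t x u := by
    intro t x u
    have hdec : ((0 : ℝ), (1 : ℝ), u) = ((0 : ℝ), (1 : ℝ), (0 : ℝ))
        + u • ((0 : ℝ), (0 : ℝ), (1 : ℝ)) := by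
      simp [Prod.ext_iff]
    rw [hdec, map_add, map_smul, smul_eq_mul,
      show (fderiv ℝ F (t, x, u)) (0, 1, 0) = deriv (fun s => f t s u) x from
        (pd2 t x u).deriv.symm,
      show (fderiv ℝ F (t, x, u)) (0, 0, 1) = deriv (fun s => f t x s) u from
        (pd3 t x u).deriv.symm]
    exact h2 t x u
  -- flow in t
  have flow1 : ∀ t x u : ℝ, f t x u = Real.exp t * f 0 x (Real.exp (-t) * u) := by
    intro t x u
    set φ : ℝ → ℝ := fun s => Real.exp (-s) * f (t + s) x (Real.exp s * u) with hφdef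
    have hφ : ∀ s, HasDerivAt φ 0 s := by
      intro s
      have hγ : HasDerivAt (fun s : ℝ => ((t + s : ℝ), (x : ℝ), Real.exp s * u))
          ((1 : ℝ), (0 : ℝ), Real.exp s * u) s := by
        refine HasDerivAt.prodMk ?_ (HasDerivAt.prodMk (hasDerivAt_const s x) ?_)
        · simpa using (hasDerivAt_id s).const_add t
        · simpa using (Real.hasDerivAt_exp s).mul_const u
      have hc : HasDerivAt (fun s => f (t + s) x (Real.exp s * u))
          (fderiv ℝ F ((t + s), x, Real.exp s * u) (1, 0, Real.exp s * u)) s :=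
        (hd _).hasFDerivAt.comp_hasDerivAt s hγ
      rw [h1' (t + s) x (Real.exp s * u)] at hc
      have he : HasDerivAt (fun s : ℝ => Real.exp (-s)) (-Real.exp (-s)) s := by
        simpa [Function.comp_def] using (Real.hasDerivAt_exp (-s)).comp s (hasDerivAt_neg s)
      have := he.mul hc
      simpa [hφdef, Pi.mul_def] using this.congr_deriv (by ring)
    have hconst := is_const_of_deriv_eq_zero
      (fun s => (hφ s).differentiableAt) (fun s => (hφ s).deriv) 0 (-t)
    have h0 : φ 0 = f t x u := by simp [hφdef]
    have hmt : φ (-t) = Real.exp t * f 0 x (Real.exp (-t) * u) := by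
      simp [hφdef]
    rw [← h0, hconst, hmt]
  -- flow in x
  have flow2 : ∀ t x u : ℝ, f t x u = Real.exp x * f t 0 (Real.exp (-x) * u) := by
    intro t x u
    set φ : ℝ → ℝ := fun s => Real.exp (-s) * f t (x + s) (Real.exp s * u) with hφdef
    have hφ : ∀ s, HasDerivAt φ 0 s := by
      intro s
      have hγ : HasDerivAt (fun s : ℝ => ((t : ℝ), (x + s : ℝ), Real.exp s * u))
          ((0 : ℝ), (1 : ℝ), Real.exp s * u) s := by
        refine HasDerivAt.prodMk (hasDerivAt_const s t) (HasDerivAt.prodMk ?_ ?_)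
        · simpa using (hasDerivAt_id s).const_add x
        · simpa using (Real.hasDerivAt_exp s).mul_const u
      have hc : HasDerivAt (fun s => f t (x + s) (Real.exp s * u))
          (fderiv ℝ F (t, (x + s), Real.exp s * u) (0, 1, Real.exp s * u)) s :=
        (hd _).hasFDerivAt.comp_hasDerivAt s hγ
      rw [h2' t (x + s) (Real.exp s * u)] at hc
      have he : HasDerivAt (fun s : ℝ => Real.exp (-s)) (-Real.exp (-s)) s := by
        simpa [Function.comp_def] using (Real.hasDerivAt_exp (-s)).comp s (hasDerivAt_neg s)
      have := he.mul hc
      simpa [hφdef, Pi.mul_def] using this.congr_deriv (by ring)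
    have hconst := is_const_of_deriv_eq_zero
      (fun s => (hφ s).differentiableAt) (fun s => (hφ s).deriv) 0 (-x)
    have h0 : φ 0 = f t x u := by simp [hφdef]
    have hmt : φ (-x) = Real.exp x * f t 0 (Real.exp (-x) * u) := by
      simp [hφdef]
    rw [← h0, hconst, hmt]
  refine ⟨fun v => f 0 0 v, ?_, ?_⟩
  · have : ContDiff ℝ (⊤ : ℕ∞) (fun v : ℝ => F ((0 : ℝ), (0 : ℝ), v)) :=
      hf.comp (contDiff_const.prodMk (contDiff_const.prodMk contDiff_id))
    simpa [hF] using this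
  · intro t x u
    rw [flow1 t x u, flow2 0 x (Real.exp (-t) * u)]
    rw [← mul_assoc, ← Real.exp_add, ← mul_assoc, ← Real.exp_add]
    ring_nf
end

section
/- The set of transformations of the form (t,x,u) ↦ (T(t), X(x), Cu + U⁰(t,x)) together with the swap (t,x,u) ↦ (x,t,u), where T, X are diffeomorphisms of ℝ, C ≠ 0, and U⁰ is smooth, forms a group under composition: the composition of two transformations of the first form is again of that form, with T̃∘T, X̃∘X, C̃C, and C̃U⁰(t,x) + Ũ⁰(T(t),X(x)) as parameters. -/
/-- A diffeomorphism of the real line: a smooth bijection with nowhere-zero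
derivative (hence smooth inverse). -/
def IsLineDiffeo (T : ℝ → ℝ) : Prop :=
  ContDiff ℝ (⊤ : ℕ∞) T ∧ Function.Bijective T ∧ ∀ t, deriv T t ≠ 0

/-- The transformation (t,x,u) ↦ (T(t), X(x), Cu + U⁰(t,x)). -/
def primTrans (T X : ℝ → ℝ) (C : ℝ) (U0 : ℝ → ℝ → ℝ) :
    ℝ × ℝ × ℝ → ℝ × ℝ × ℝ :=
  fun p => (T p.1, X p.2.1, C * p.2.2 + U0 p.1 p.2.1)

/-- The swap (t,x,u) ↦ (x,t,u). -/
def swapTX : ℝ × ℝ × ℝ → ℝ × ℝ × ℝ := fun p => (p.2.1, p.1, p.2.2)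

/-- Membership in the (projected) equivalence group: either of the primary form
or the primary form composed with the (t,x)-swap. -/
def InEquivGroup (φ : ℝ × ℝ × ℝ → ℝ × ℝ × ℝ) : Prop :=
  ∃ T X : ℝ → ℝ, ∃ C : ℝ, ∃ U0 : ℝ → ℝ → ℝ,
    IsLineDiffeo T ∧ IsLineDiffeo X ∧ C ≠ 0 ∧
    ContDiff ℝ (⊤ : ℕ∞) (fun q : ℝ × ℝ => U0 q.1 q.2) ∧
    (φ = primTrans T X C U0 ∨ φ = primTrans T X C U0 ∘ swapTX)

lemma IsLineDiffeo.inv {T : ℝ → ℝ} (h : IsLineDiffeo T) :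
    ∃ S : ℝ → ℝ, IsLineDiffeo S ∧ (∀ t, S (T t) = t) ∧ (∀ t, T (S t) = t) := by
  obtain ⟨hT, hbij, hd⟩ := h
  have hdc : Continuous (deriv T) := hT.continuous_deriv (by simp)
  have hsign : (∀ t, 0 < deriv T t) ∨ (∀ t, deriv T t < 0) := by
    by_contra hc
    push_neg at hc
    obtain ⟨⟨a, ha⟩, b, hb⟩ := hc
    have ha' : deriv T a ≤ 0 := ha
    have hb' : 0 ≤ deriv T b := hb
    obtain ⟨c, hc0⟩ := intermediate_value_univ a b hdc ⟨ha', hb'⟩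
    exact hd c hc0
  have he : ∃ e : ℝ ≃ₜ ℝ, ∀ x, e x = T x := by
    rcases hsign with hp | hn
    · have hm : StrictMono T := strictMono_of_deriv_pos hp
      exact ⟨(StrictMono.orderIsoOfSurjective T hm hbij.2).toHomeomorph, fun x => rfl⟩
    · have hA : StrictAnti T := strictAnti_of_deriv_neg hn
      have hm : StrictMono (fun t => -T t) := fun a b hab => neg_lt_neg (hA hab)
      have hs : Function.Surjective (fun t => -T t) := by
        intro y; obtain ⟨t, ht⟩ := hbij.2 (-y); exact ⟨t, by simp [ht]⟩
      exact ⟨((StrictMono.orderIsoOfSurjective _ hm hs).toHomeomorph).trans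
        (Homeomorph.neg ℝ), fun x => neg_neg (T x)⟩
  obtain ⟨e, hcoe⟩ := he
  have hcoe' : ⇑e = T := funext hcoe
  refine ⟨⇑e.symm, ⟨?_, ?_, ?_⟩, ?_, ?_⟩
  · exact e.contDiff_symm_deriv hd (fun x => by
      rw [hcoe']; exact ((hT.differentiable (by simp)) x).hasDerivAt) (by rw [hcoe']; exact hT)
  · exact e.symm.bijective
  · intro a
    have hf : HasDerivAt T (deriv T (e.symm a)) (e.symm a) :=
      ((hT.differentiable (by simp)) _).hasDerivAt
    have hda : HasDerivAt (⇑e.symm) (deriv T (e.symm a))⁻¹ a :=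
      HasDerivAt.of_local_left_inverse e.symm.continuous.continuousAt
        hf (hd _) (Filter.Eventually.of_forall fun y =>
          (by rw [← hcoe']; exact e.apply_symm_apply y : T (e.symm y) = y))
    rw [hda.deriv]
    exact inv_ne_zero (hd _)
  · intro t; rw [← hcoe]; exact e.symm_apply_apply t
  · intro t; rw [← hcoe']; exact e.apply_symm_apply t

lemma IsLineDiffeo.id' : IsLineDiffeo id :=
  ⟨contDiff_id, Function.bijective_id, fun t => by simp⟩

lemma IsLineDiffeo.comp' {T' T : ℝ → ℝ} (h' : IsLineDiffeo T') (h : IsLineDiffeo T) :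
    IsLineDiffeo (T' ∘ T) := by
  refine ⟨h'.1.comp h.1, h'.2.1.comp h.2.1, fun t => ?_⟩
  rw [deriv_comp t ((h'.1.differentiable (by simp)) _) ((h.1.differentiable (by simp)) _)]
  exact mul_ne_zero (h'.2.2 _) (h.2.2 _)

lemma prim_comp (T X T' X' : ℝ → ℝ) (C C' : ℝ) (U0 U0' : ℝ → ℝ → ℝ) :
    primTrans T' X' C' U0' ∘ primTrans T X C U0
      = primTrans (T' ∘ T) (X' ∘ X) (C' * C)
          (fun t x => C' * U0 t x + U0' (T t) (X x)) := by
  funext p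
  refine Prod.ext rfl (Prod.ext rfl ?_)
  show C' * (C * p.2.2 + U0 p.1 p.2.1) + U0' (T p.1) (X p.2.1)
    = C' * C * p.2.2 + (C' * U0 p.1 p.2.1 + U0' (T p.1) (X p.2.1))
  ring

lemma swap_prim (T X : ℝ → ℝ) (C : ℝ) (U0 : ℝ → ℝ → ℝ) :
    swapTX ∘ primTrans T X C U0 = primTrans X T C (fun x t => U0 t x) ∘ swapTX := rfl

lemma swap_swap : swapTX ∘ swapTX = id := rfl

lemma memPrim {T X : ℝ → ℝ} {C : ℝ} {U0 : ℝ → ℝ → ℝ} (hT : IsLineDiffeo T)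
    (hX : IsLineDiffeo X) (hC : C ≠ 0) (hU : ContDiff ℝ (⊤ : ℕ∞) (fun q : ℝ × ℝ => U0 q.1 q.2)) :
    InEquivGroup (primTrans T X C U0) :=
  ⟨T, X, C, U0, hT, hX, hC, hU, Or.inl rfl⟩

lemma memPrimSwap {T X : ℝ → ℝ} {C : ℝ} {U0 : ℝ → ℝ → ℝ} (hT : IsLineDiffeo T)
    (hX : IsLineDiffeo X) (hC : C ≠ 0) (hU : ContDiff ℝ (⊤ : ℕ∞) (fun q : ℝ × ℝ => U0 q.1 q.2)) :
    InEquivGroup (primTrans T X C U0 ∘ swapTX) :=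
  ⟨T, X, C, U0, hT, hX, hC, hU, Or.inr rfl⟩

lemma flipU {U0 : ℝ → ℝ → ℝ} (hU : ContDiff ℝ (⊤ : ℕ∞) (fun q : ℝ × ℝ => U0 q.1 q.2)) :
    ContDiff ℝ (⊤ : ℕ∞) (fun q : ℝ × ℝ => U0 q.2 q.1) :=
  hU.comp (contDiff_snd.prodMk contDiff_fst)

lemma compU {T X : ℝ → ℝ} {C' : ℝ} {U0 U0' : ℝ → ℝ → ℝ} (hT : IsLineDiffeo T)
    (hX : IsLineDiffeo X)
    (hU : ContDiff ℝ (⊤ : ℕ∞) (fun q : ℝ × ℝ => U0 q.1 q.2))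
    (hU' : ContDiff ℝ (⊤ : ℕ∞) (fun q : ℝ × ℝ => U0' q.1 q.2)) :
    ContDiff ℝ (⊤ : ℕ∞) (fun q : ℝ × ℝ => C' * U0 q.1 q.2 + U0' (T q.1) (X q.2)) :=
  (contDiff_const.mul hU).add
    (hU'.comp ((hT.1.comp contDiff_fst).prodMk (hX.1.comp contDiff_snd)))


/-- The transformations (t,x,u) ↦ (T(t),X(x),Cu+U⁰(t,x)) together with the swap
form a group under composition; the composition of two transformations of the
primary form is again of that form, with parameters T̃∘T, X̃∘X, C̃C and
C̃U⁰(t,x) + Ũ⁰(T(t),X(x)). -/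
theorem stmt18 :
    (∀ (T X T' X' : ℝ → ℝ) (C C' : ℝ) (U0 U0' : ℝ → ℝ → ℝ),
      IsLineDiffeo T → IsLineDiffeo X → IsLineDiffeo T' → IsLineDiffeo X' →
      C ≠ 0 → C' ≠ 0 →
      ContDiff ℝ (⊤ : ℕ∞) (fun q : ℝ × ℝ => U0 q.1 q.2) →
      ContDiff ℝ (⊤ : ℕ∞) (fun q : ℝ × ℝ => U0' q.1 q.2) →
      primTrans T' X' C' U0' ∘ primTrans T X C U0
        = primTrans (T' ∘ T) (X' ∘ X) (C' * C)
            (fun t x => C' * U0 t x + U0' (T t) (X x))) ∧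
    InEquivGroup id ∧
    (∀ φ ψ, InEquivGroup φ → InEquivGroup ψ → InEquivGroup (φ ∘ ψ)) ∧
    (∀ φ, InEquivGroup φ →
      ∃ ψ, InEquivGroup ψ ∧ φ ∘ ψ = id ∧ ψ ∘ φ = id) := by
  refine ⟨fun T X T' X' C C' U0 U0' _ _ _ _ _ _ _ _ => prim_comp .., ?_, ?_, ?_⟩
  · refine ⟨id, id, 1, fun _ _ => 0, .id', .id', one_ne_zero, contDiff_const, Or.inl ?_⟩
    funext p; simp [primTrans]
  · rintro φ ψ ⟨T', X', C', U0', hT', hX', hC', hU', hφ | hφ⟩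
      ⟨T, X, C, U0, hT, hX, hC, hU, hψ | hψ⟩ <;> subst hφ hψ
    · rw [prim_comp]
      exact memPrim (hT'.comp' hT) (hX'.comp' hX) (mul_ne_zero hC' hC) (compU hT hX hU hU')
    · show InEquivGroup ((primTrans T' X' C' U0' ∘ primTrans T X C U0) ∘ swapTX)
      rw [prim_comp]
      exact memPrimSwap (hT'.comp' hT) (hX'.comp' hX) (mul_ne_zero hC' hC) (compU hT hX hU hU')
    · show InEquivGroup
        ((primTrans T' X' C' U0' ∘ primTrans X T C fun x t => U0 t x) ∘ swapTX)
      rw [prim_comp]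
      exact memPrimSwap (hT'.comp' hX) (hX'.comp' hT) (mul_ne_zero hC' hC)
        (compU (U0 := fun x t => U0 t x) hX hT (flipU hU) hU')
    · show InEquivGroup (primTrans T' X' C' U0' ∘ primTrans X T C fun x t => U0 t x)
      rw [prim_comp]
      exact memPrim (hT'.comp' hX) (hX'.comp' hT) (mul_ne_zero hC' hC)
        (compU (U0 := fun x t => U0 t x) hX hT (flipU hU) hU')
  · rintro φ ⟨T, X, C, U0, hT, hX, hC, hU, hφ | hφ⟩ <;> subst hφ <;> (
      obtain ⟨ST, hST, hSTl, hSTr⟩ := hT.inv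
      obtain ⟨SX, hSX, hSXl, hSXr⟩ := hX.inv
      set V : ℝ → ℝ → ℝ := fun t x => -(C⁻¹ * U0 (ST t) (SX x)) with hV
      have hUV : ContDiff ℝ (⊤ : ℕ∞) (fun q : ℝ × ℝ => V q.1 q.2) :=
        ((contDiff_const.mul (hU.comp ((hST.1.comp contDiff_fst).prodMk
          (hSX.1.comp contDiff_snd)))).neg)
      have h1 : primTrans T X C U0 ∘ primTrans ST SX C⁻¹ V = id := by
        funext p
        simp only [Function.comp_apply, primTrans, hSTr, hSXr, id_eq, hV]
        refine Prod.ext rfl (Prod.ext rfl ?_)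
        show C * (C⁻¹ * p.2.2 + -(C⁻¹ * U0 (ST p.1) (SX p.2.1))) + U0 (ST p.1) (SX p.2.1) = p.2.2
        field_simp; ring
      have h2 : primTrans ST SX C⁻¹ V ∘ primTrans T X C U0 = id := by
        funext p
        refine Prod.ext (hSTl _) (Prod.ext (hSXl _) ?_)
        show C⁻¹ * (C * p.2.2 + U0 p.1 p.2.1) + -(C⁻¹ * U0 (ST (T p.1)) (SX (X p.2.1))) = p.2.2
        rw [hSTl, hSXl]
        field_simp; ring
      first
      | exact ⟨primTrans ST SX C⁻¹ V, memPrim hST hSX (inv_ne_zero hC) hUV, h1, h2⟩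
      | exact ⟨primTrans SX ST C⁻¹ (fun x t => V t x) ∘ swapTX,
          memPrimSwap hSX hST (inv_ne_zero hC) (flipU hUV),
          h1,
          by show swapTX ∘ (primTrans ST SX C⁻¹ V ∘ primTrans T X C U0) ∘ swapTX = id
             rw [h2]; rfl⟩)
end

section
/- Fix a nonzero constant q. Let f(t,x,u) = |x−t|^{−q−2} ĝ(|x−t|^q u) for x ≠ t, where ĝ is smooth. Then the vector fields Q¹ = ∂_t + ∂_x and Q² = t∂_t + x∂_x − qu∂_u each satisfy the classifying equation τ f_t + ξ f_x + η¹u f_u = (η¹ − τ_t − ξ_x) f for the equation u_{tx} = f, and [Q¹, Q²] = Q¹. -/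
/-- The classifying equation for a Lie symmetry τ(t)∂_t + ξ(x)∂_x + η¹u∂_u of
u_{tx} = f(t,x,u), on the domain x ≠ t. -/
noncomputable def ClassifyingEqOffDiag (f : ℝ → ℝ → ℝ → ℝ) (τ ξ : ℝ → ℝ)
    (η1 : ℝ) : Prop :=
  ∀ t x u : ℝ, x ≠ t →
    τ t * deriv (fun s => f s x u) t + ξ x * deriv (fun s => f t s u) x
      + η1 * u * deriv (fun s => f t x s) u
    = (η1 - deriv τ t - deriv ξ x) * f t x u

/-- derivative of `s ↦ h s ^ c * g (h s ^ q * u)` -/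
lemma helper_deriv (g : ℝ → ℝ) (hg : ContDiff ℝ (⊤ : ℕ∞) g) (c q u m t A : ℝ)
    (h : ℝ → ℝ) (hh : HasDerivAt h m t) (hA : h t = A) (hApos : 0 < A) :
    HasDerivAt (fun s => h s ^ c * g (h s ^ q * u))
      (m * (c * A ^ (c - 1) * g (A ^ q * u)
        + q * u * A ^ (c + q - 1) * deriv g (A ^ q * u))) t := by
  subst hA
  have hne : h t ≠ 0 := hApos.ne'
  have H1 : HasDerivAt (fun s => h s ^ c) (m * c * h t ^ (c - 1)) t :=
    hh.rpow_const (Or.inl hne)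
  have H2 : HasDerivAt (fun s => h s ^ q * u) (m * q * h t ^ (q - 1) * u) t :=
    (hh.rpow_const (Or.inl hne)).mul_const u
  have Hg : HasDerivAt g (deriv g (h t ^ q * u)) (h t ^ q * u) :=
    ((hg.differentiable (by simp)) (h t ^ q * u)).hasDerivAt
  have Hcomp : HasDerivAt (fun s => g (h s ^ q * u))
      (deriv g (h t ^ q * u) * (m * q * h t ^ (q - 1) * u)) t := Hg.comp t H2
  have Hfull : HasDerivAt (fun s => h s ^ c * g (h s ^ q * u)) _ t := H1.mul Hcomp
  convert Hfull using 1
  have e : h t ^ (c + q - 1) = h t ^ c * h t ^ (q - 1) := by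
    rw [← Real.rpow_add hApos]; ring_nf
  rw [e]; ring

/-- For q ≠ 0 and f = |x−t|^{−q−2} ĝ(|x−t|^q u), the fields Q¹ = ∂_t + ∂_x and
Q² = t∂_t + x∂_x − qu∂_u satisfy the classifying equation of u_{tx} = f, and
[Q¹,Q²] = Q¹. -/
theorem stmt19 (q : ℝ) (hq : q ≠ 0) (g : ℝ → ℝ) (hg : ContDiff ℝ (⊤ : ℕ∞) g)
    (f : ℝ → ℝ → ℝ → ℝ)
    (hf : ∀ t x u : ℝ, x ≠ t → f t x u = |x - t| ^ (-q - 2) * g (|x - t| ^ q * u)) :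
    ClassifyingEqOffDiag f (fun _ => 1) (fun _ => 1) 0 ∧
    ClassifyingEqOffDiag f (fun t => t) (fun x => x) (-q) ∧
    vfBracket ((fun _ => 1, fun _ => 1, fun _ => 0) : VF3)
        ((fun t => t, fun x => x, fun u => -q * u) : VF3)
      = ((fun _ => 1, fun _ => 1, fun _ => 0) : VF3) := by
  -- the key derivative computations
  have main : ∀ t x u : ℝ, x ≠ t →
      ∃ σ : ℝ, σ * (x - t) = |x - t| ∧
      deriv (fun s => f s x u) t
        = -σ * ((-q - 2) * |x - t| ^ (-q - 2 - 1) * g (|x - t| ^ q * u)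
            + q * u * |x - t| ^ (-q - 2 + q - 1) * deriv g (|x - t| ^ q * u)) ∧
      deriv (fun s => f t s u) x
        = σ * ((-q - 2) * |x - t| ^ (-q - 2 - 1) * g (|x - t| ^ q * u)
            + q * u * |x - t| ^ (-q - 2 + q - 1) * deriv g (|x - t| ^ q * u)) ∧
      deriv (fun s => f t x s) u
        = |x - t| ^ (-q - 2) * (deriv g (|x - t| ^ q * u) * |x - t| ^ q) := by
    intro t x u hxt
    have hxt' : x - t ≠ 0 := sub_ne_zero.mpr hxt
    have hApos : (0 : ℝ) < |x - t| := abs_pos.mpr hxt'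
    obtain ⟨σ, hσA, hevt, hevx⟩ : ∃ σ : ℝ, σ * (x - t) = |x - t| ∧
        (∀ᶠ s in nhds t, |x - s| = σ * (x - s)) ∧
        (∀ᶠ s in nhds x, |s - t| = σ * (s - t)) := by
      rcases lt_or_gt_of_ne hxt' with h | h
      · refine ⟨-1, by rw [abs_of_neg h]; ring, ?_, ?_⟩
        · filter_upwards [eventually_gt_nhds (show t > x by linarith)] with s hs
          rw [abs_of_neg (by linarith)]; ring
        · filter_upwards [eventually_lt_nhds (show x < t by linarith)] with s hs
          rw [abs_of_neg (by linarith)]; ring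
      · refine ⟨1, by rw [abs_of_pos h]; ring, ?_, ?_⟩
        · filter_upwards [eventually_lt_nhds (show t < x by linarith)] with s hs
          rw [abs_of_pos (by linarith)]; ring
        · filter_upwards [eventually_gt_nhds (show x > t by linarith)] with s hs
          rw [abs_of_pos (by linarith)]; ring
    refine ⟨σ, hσA, ?_, ?_, ?_⟩
    · -- t-derivative
      have Hh : HasDerivAt (fun s => σ * (x - s)) (-σ) t := by
        simpa using ((hasDerivAt_id t).const_sub x).const_mul σ
      have HD := helper_deriv g hg (-q - 2) q u (-σ) t (|x - t|) _ Hh hσA hApos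
      have hev : (fun s => f s x u) =ᶠ[nhds t]
          fun s => (σ * (x - s)) ^ (-q - 2) * g ((σ * (x - s)) ^ q * u) := by
        filter_upwards [hevt, eventually_ne_nhds (Ne.symm hxt)] with s h1 h2
        rw [hf s x u (Ne.symm h2), h1]
      rw [hev.deriv_eq, HD.deriv]
    · -- x-derivative
      have Hh : HasDerivAt (fun s => σ * (s - t)) σ x := by
        simpa using ((hasDerivAt_id x).sub_const t).const_mul σ
      have HD := helper_deriv g hg (-q - 2) q u σ x (|x - t|) _ Hh hσA hApos
      have hev : (fun s => f t s u) =ᶠ[nhds x]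
          fun s => (σ * (s - t)) ^ (-q - 2) * g ((σ * (s - t)) ^ q * u) := by
        filter_upwards [hevx, eventually_ne_nhds hxt] with s h1 h2
        rw [hf t s u h2, h1]
      rw [hev.deriv_eq, HD.deriv]
    · -- u-derivative
      have heq : (fun s => f t x s) = fun s => |x - t| ^ (-q - 2) * g (|x - t| ^ q * s) :=
        funext fun s => hf t x s hxt
      rw [heq]
      have Hg : HasDerivAt g (deriv g (|x - t| ^ q * u)) (|x - t| ^ q * u) :=
        ((hg.differentiable (by simp)) _).hasDerivAt
      have H2 : HasDerivAt (fun s => |x - t| ^ q * s) (|x - t| ^ q) u := by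
        simpa using (hasDerivAt_id u).const_mul (|x - t| ^ q)
      have HD : HasDerivAt (fun s => |x - t| ^ (-q - 2) * g (|x - t| ^ q * s))
          (|x - t| ^ (-q - 2) * (deriv g (|x - t| ^ q * u) * |x - t| ^ q)) u :=
        (Hg.comp u H2).const_mul _
      exact HD.deriv
  refine ⟨?_, ?_, ?_⟩
  · intro t x u hxt
    obtain ⟨σ, hσA, hdt, hdx, hdu⟩ := main t x u hxt
    rw [hdt, hdx, hdu]
    simp only [deriv_const']
    ring
  · intro t x u hxt
    obtain ⟨σ, hσA, hdt, hdx, hdu⟩ := main t x u hxt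
    have hxt' : x - t ≠ 0 := sub_ne_zero.mpr hxt
    have hApos : (0 : ℝ) < |x - t| := abs_pos.mpr hxt'
    have hAne : |x - t| ≠ 0 := hApos.ne'
    rw [hdt, hdx, hdu, hf t x u hxt]
    simp only [deriv_id'']
    set A := |x - t| with hA
    have R2 : A ^ (-q - 2 - 1) * A = A ^ (-q - 2) := by
      rw [← Real.rpow_add_one hAne]; norm_num
    have R2' : A ^ (-q - 2 + q - 1) * A = A ^ (-q - 2 + q) := by
      rw [← Real.rpow_add_one hAne]; norm_num
    have R3 : A ^ (-q - 2 + q) = A ^ (-q - 2) * A ^ q := by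
      rw [← Real.rpow_add hApos]
    linear_combination
      ((-q - 2) * A ^ (-q - 2 - 1) * g (A ^ q * u)
        + q * u * A ^ (-q - 2 + q - 1) * deriv g (A ^ q * u)) * hσA
      + (-q - 2) * g (A ^ q * u) * R2
      + q * u * deriv g (A ^ q * u) * R2'
      + q * u * deriv g (A ^ q * u) * R3
  · refine Prod.ext ?_ (Prod.ext ?_ ?_) <;>
      · funext y
        simp [vfBracket]
end
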